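/- Let p ≥ 1, let PF ⊆ ℝ^p be a nonempty finite reference set, let r_1,…,r_p > 0 be positive scaling constants, and for a nonempty finite set N ⊆ ℝ^p define ε₊(N) = max_{x ∈ PF} min_{y ∈ N} max_{i=1,…,p} (y_i − x_i)/r_i. If A and B are nonempty finite subsets of ℝ^p such that every point of B is weakly dominated by some point of A (for every b ∈ B there is a ∈ A with a_i ≤ b_i for all i), then ε₊(A) ≤ ε₊(B); in particular the additive epsilon indicator is Pareto compliant. -/
import Mathlib


/-- The scaled additive epsilon indicator
`ε₊(N) = max_{x ∈ PF} min_{y ∈ N} max_i (y_i - x_i) / r_i`. -/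
noncomputable def epsPlus {p : ℕ} (hp : 1 ≤ p) (PF : Finset (Fin p → ℝ))
    (hPF : PF.Nonempty) (r : Fin p → ℝ) (N : Finset (Fin p → ℝ))
    (hN : N.Nonempty) : ℝ :=
  PF.sup' hPF fun x =>
    N.inf' hN fun y =>
      (Finset.univ : Finset (Fin p)).sup' ⟨⟨0, hp⟩, Finset.mem_univ _⟩
        fun i => (y i - x i) / r i

/-- if every point of `B` is weakly dominated by some point of `A`,
then `ε₊(A) ≤ ε₊(B)`: the additive epsilon indicator is Pareto compliant. -/
theorem epsPlus_pareto_compliant {p : ℕ} (hp : 1 ≤ p) (PF : Finset (Fin p → ℝ))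
    (hPF : PF.Nonempty) (r : Fin p → ℝ) (hr : ∀ i, 0 < r i)
    (A B : Finset (Fin p → ℝ)) (hA : A.Nonempty) (hB : B.Nonempty)
    (hdom : ∀ b ∈ B, ∃ a ∈ A, ∀ i, a i ≤ b i) :
    epsPlus hp PF hPF r A hA ≤ epsPlus hp PF hPF r B hB := by
  unfold epsPlus
  apply Finset.sup'_le
  intro x hx
  apply Finset.le_sup'_of_le _ hx
  apply le_trans (b := A.inf' hA fun y =>
      (Finset.univ : Finset (Fin p)).sup' ⟨⟨0, hp⟩, Finset.mem_univ _⟩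
        fun i => (y i - x i) / r i)
  · exact le_refl _
  apply Finset.le_inf'
  intro b hb
  obtain ⟨a, ha, hab⟩ := hdom b hb
  apply Finset.inf'_le_of_le _ ha
  apply Finset.sup'_le
  intro i _
  apply Finset.le_sup'_of_le _ (Finset.mem_univ i)
  exact div_le_div_of_nonneg_right (by linarith [hab i]) (hr i).le
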